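/- arXiv:0707.2143 — 3 statements merged into one kernel-verified Lean document; each statement's English description precedes it below -/
import Mathlib

section
/- (Quasi-invariance, Theorem 2.1, first form.) Let h^1,…,h^m : ℝ → ℝ be smooth bounded functions, let L^h_t f = Lf + ∑_{i=1}^m h^i(t)⟨X_i, ∇f⟩, and let L̃^h_t be the operator on smooth functions of (x,u) ∈ ℝ^d × ℝ given by L̃^h_t F(x,u) = ⟨X_0(x), ∇_x F⟩ + (1/2)∑_{i=1}^m ⟨DX_i(x)X_i(x), ∇_x F⟩ + (1/2)∑_{i=1}^m ⟨X̃_i^t(x,u), Hess F X̃_i^t(x,u)⟩ with X̃_i^t(x,u) = (X_i(x), h^i(t)·u). Fix T > 0 and a smooth bounded f : ℝ^d → ℝ. Suppose: (i) F : [0,T] × ℝ^d → ℝ is bounded, smooth, and satisfies ∂_t F(t,x) = (L^h_t F(t,·))(x) with F(0,·) = f; (ii) G : [0,T] × ℝ^{d+1} → ℝ is smooth, satisfies ∂_t G(t,x,u) = (L̃^h_t G(t,·,·))(x,u) with G(0,x,u) = u·f(x), satisfies G(t,x,u) = u·G(t,x,1) for all (t,x,u), and G(·,·,1) is bounded; (iii)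 any two bounded smooth solutions H : [0,T] × ℝ^d → ℝ of ∂_t H = L^h_t H with the same initial condition coincide. Then F(t,x) = G(t,x,1) for all (t,x) ∈ [0,T] × ℝ^d. -/
open scoped BigOperators

/-- Bounded derivatives of all orders (order ≥ 1). -/
def BoundedDerivs {d : ℕ} (X : (Fin d → ℝ) → Fin d → ℝ) : Prop :=
  ∀ n : ℕ, 1 ≤ n → ∃ C : ℝ, ∀ x, ‖iteratedFDeriv ℝ n X x‖ ≤ C

/-- The Hörmander-type operator `L`. -/
noncomputable def hormanderL {d m : ℕ} (X : Fin (m + 1) → (Fin d → ℝ) → Fin d → ℝ)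
    (f : (Fin d → ℝ) → ℝ) (x : Fin d → ℝ) : ℝ :=
  fderiv ℝ f x (X 0 x)
    + (1 / 2) * ∑ i : Fin m, fderiv ℝ f x (fderiv ℝ (X i.succ) x (X i.succ x))
    + (1 / 2) * ∑ i : Fin m,
        fderiv ℝ (fun y => fderiv ℝ f y (X i.succ x)) x (X i.succ x)

/-- The perturbed operator `L^h_t f = Lf + ∑ᵢ hⁱ(t) ⟨Xᵢ, ∇f⟩`. -/
noncomputable def perturbedL {d m : ℕ} (X : Fin (m + 1) → (Fin d → ℝ) → Fin d → ℝ)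
    (h : Fin m → ℝ → ℝ) (t : ℝ) (f : (Fin d → ℝ) → ℝ) (x : Fin d → ℝ) : ℝ :=
  hormanderL X f x + ∑ i : Fin m, h i t * fderiv ℝ f x (X i.succ x)

/-- The operator `L̃^h_t` on functions of `(x,u)`, built from `X̃ᵢᵗ(x,u) = (Xᵢ(x), hⁱ(t)·u)`. -/
noncomputable def tildeL {d m : ℕ} (X : Fin (m + 1) → (Fin d → ℝ) → Fin d → ℝ)
    (h : Fin m → ℝ → ℝ) (t : ℝ) (F : (Fin d → ℝ) × ℝ → ℝ) (p : (Fin d → ℝ) × ℝ) : ℝ :=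
  fderiv ℝ F p (X 0 p.1, 0)
    + (1 / 2) * ∑ i : Fin m, fderiv ℝ F p (fderiv ℝ (X i.succ) p.1 (X i.succ p.1), 0)
    + (1 / 2) * ∑ i : Fin m,
        fderiv ℝ (fun q => fderiv ℝ F q (X i.succ p.1, h i t * p.2)) p
          (X i.succ p.1, h i t * p.2)

/-- `H : [0,T] × ℝ^d → ℝ` is a bounded smooth solution of `∂ₜH = L^h_t H` on `[0,T]`. -/
def IsBddSolPerturbed {d m : ℕ} (X : Fin (m + 1) → (Fin d → ℝ) → Fin d → ℝ)
    (h : Fin m → ℝ → ℝ) (T : ℝ) (H : ℝ → (Fin d → ℝ) → ℝ) : Prop :=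
  (∃ C : ℝ, ∀ t ∈ Set.Icc (0 : ℝ) T, ∀ x, |H t x| ≤ C) ∧
  ContDiffOn ℝ (⊤ : ℕ∞) (fun p : ℝ × (Fin d → ℝ) => H p.1 p.2) (Set.Icc (0 : ℝ) T ×ˢ Set.univ) ∧
  ∀ t ∈ Set.Icc (0 : ℝ) T, ∀ x,
    HasDerivWithinAt (fun s => H s x) (perturbedL X h t (H t) x) (Set.Icc (0 : ℝ) T) t

lemma fderiv_mul_slice {d : ℕ} (g : (Fin d → ℝ) → ℝ) (hg : ContDiff ℝ (⊤ : ℕ∞) g)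
    (p : (Fin d → ℝ) × ℝ) (v : Fin d → ℝ) (w : ℝ) :
    fderiv ℝ (fun q : (Fin d → ℝ) × ℝ => q.2 * g q.1) p (v, w)
      = p.2 * fderiv ℝ g p.1 v + g p.1 * w := by
  have hg' : HasFDerivAt (fun q : (Fin d → ℝ) × ℝ => g q.1)
      ((fderiv ℝ g p.1).comp (ContinuousLinearMap.fst ℝ (Fin d → ℝ) ℝ)) p :=
    ((hg.differentiable (by simp) p.1).hasFDerivAt).comp p hasFDerivAt_fst
  have h := (hasFDerivAt_snd (𝕜 := ℝ) (p := p)).fun_mul hg'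
  rw [h.fderiv]
  simp

lemma fderiv2_slice {d : ℕ} (g : (Fin d → ℝ) → ℝ) (hg : ContDiff ℝ (⊤ : ℕ∞) g)
    (x v : Fin d → ℝ) (c : ℝ) :
    fderiv ℝ (fun q : (Fin d → ℝ) × ℝ =>
        fderiv ℝ (fun q' : (Fin d → ℝ) × ℝ => q'.2 * g q'.1) q (v, c)) (x, 1) (v, c)
      = 2 * c * fderiv ℝ g x v + fderiv ℝ (fun y => fderiv ℝ g y v) x v := by
  have heq : (fun q : (Fin d → ℝ) × ℝ => fderiv ℝ (fun q' : (Fin d → ℝ) × ℝ => q'.2 * g q'.1) q (v, c))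
      = fun q : (Fin d → ℝ) × ℝ => q.2 * fderiv ℝ g q.1 v + g q.1 * c := by
    funext q; exact fderiv_mul_slice g hg q v c
  rw [heq]
  have hDgv : ContDiff ℝ (⊤ : ℕ∞) (fun y => fderiv ℝ g y v) :=
    (hg.fderiv_right (by simp)).clm_apply contDiff_const
  have h1 : HasFDerivAt (fun q : (Fin d → ℝ) × ℝ => q.2 * fderiv ℝ g q.1 v)
      (((x, (1:ℝ)).2 • ((fderiv ℝ (fun y => fderiv ℝ g y v) x).comp
          (ContinuousLinearMap.fst ℝ (Fin d → ℝ) ℝ))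
        + fderiv ℝ g x v • ContinuousLinearMap.snd ℝ (Fin d → ℝ) ℝ)) (x, 1) := by
    exact (hasFDerivAt_snd (𝕜 := ℝ) (p := ((x, (1:ℝ))))).fun_mul
      (((hDgv.differentiable (by simp) (x, (1:ℝ)).1).hasFDerivAt).comp (x, (1:ℝ)) hasFDerivAt_fst)
  have h2 : HasFDerivAt (fun q : (Fin d → ℝ) × ℝ => g q.1 * c)
      (c • ((fderiv ℝ g x).comp (ContinuousLinearMap.fst ℝ (Fin d → ℝ) ℝ))) (x, 1) :=
    (((hg.differentiable (by simp) x).hasFDerivAt).comp (x, (1:ℝ)) hasFDerivAt_fst).mul_const c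
  rw [(h1.fun_add h2).fderiv]
  simp
  ring
lemma tildeL_eq_perturbedL {d m : ℕ} (X : Fin (m + 1) → (Fin d → ℝ) → Fin d → ℝ)
    (h : Fin m → ℝ → ℝ) (t : ℝ) (g : (Fin d → ℝ) → ℝ) (hg : ContDiff ℝ (⊤ : ℕ∞) g) (x : Fin d → ℝ) :
    tildeL X h t (fun q : (Fin d → ℝ) × ℝ => q.2 * g q.1) (x, 1) = perturbedL X h t g x := by
  unfold tildeL perturbedL hormanderL
  simp only []
  rw [fderiv_mul_slice g hg (x,1) (X 0 x) 0]
  have e2 : ∀ i : Fin m,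
      fderiv ℝ (fun q : (Fin d → ℝ) × ℝ => q.2 * g q.1) (x,1)
        (fderiv ℝ (X i.succ) x (X i.succ x), 0)
      = fderiv ℝ g x (fderiv ℝ (X i.succ) x (X i.succ x)) := by
    intro i; rw [fderiv_mul_slice g hg]; simp
  have e3 : ∀ i : Fin m,
      fderiv ℝ (fun q : (Fin d → ℝ) × ℝ =>
          fderiv ℝ (fun q' : (Fin d → ℝ) × ℝ => q'.2 * g q'.1) q
            (X i.succ x, h i t * 1)) (x, 1) (X i.succ x, h i t * 1)
      = 2 * (h i t * 1) * fderiv ℝ g x (X i.succ x)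
          + fderiv ℝ (fun y => fderiv ℝ g y (X i.succ x)) x (X i.succ x) :=
    fun i => fderiv2_slice g hg x (X i.succ x) (h i t * 1)
  simp only [e2, e3]
  rw [Finset.sum_add_distrib]
  simp only [mul_one]
  rw [Finset.mul_sum, Finset.mul_sum]
  have : ∀ i : Fin m, 1/2 * (2 * h i t * fderiv ℝ g x (X i.succ x))
      = h i t * fderiv ℝ g x (X i.succ x) := fun i => by ring
  simp only [mul_add, Finset.mul_sum, this]
  ring

/-- Theorem 2.1 (Quasi-invariance), first form:
`P^h_t f(x) = P̃^h_t[u f](x,1)`, i.e. `F(t,x) = G(t,x,1)`. -/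
theorem quasi_invariance (d m : ℕ) (hd : 0 < d) (hm : 0 < m)
    (X : Fin (m + 1) → (Fin d → ℝ) → Fin d → ℝ)
    (hXsmooth : ∀ i, ContDiff ℝ (⊤ : ℕ∞) (X i)) (hXbdd : ∀ i, BoundedDerivs (X i))
    (h : Fin m → ℝ → ℝ) (hhsmooth : ∀ i, ContDiff ℝ (⊤ : ℕ∞) (h i))
    (hhbdd : ∀ i, ∃ C : ℝ, ∀ t, |h i t| ≤ C)
    (T : ℝ) (hT : 0 < T)
    (f : (Fin d → ℝ) → ℝ) (hfsmooth : ContDiff ℝ (⊤ : ℕ∞) f) (hfbdd : ∃ C : ℝ, ∀ x, |f x| ≤ C)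
    -- (i) F is a bounded smooth solution of ∂ₜF = L^h_t F with F(0,·) = f
    (F : ℝ → (Fin d → ℝ) → ℝ)
    (hF : IsBddSolPerturbed X h T F) (hF0 : ∀ x, F 0 x = f x)
    -- (ii) G is a smooth solution of ∂ₜG = L̃^h_t G with G(0,x,u) = u·f(x),
    -- linear in u, with G(·,·,1) bounded
    (G : ℝ → (Fin d → ℝ) × ℝ → ℝ)
    (hGsmooth : ContDiffOn ℝ (⊤ : ℕ∞) (fun p : ℝ × ((Fin d → ℝ) × ℝ) => G p.1 p.2)
      (Set.Icc (0 : ℝ) T ×ˢ Set.univ))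
    (hGpde : ∀ t ∈ Set.Icc (0 : ℝ) T, ∀ (x : Fin d → ℝ) (u : ℝ),
      HasDerivWithinAt (fun s => G s (x, u)) (tildeL X h t (G t) (x, u)) (Set.Icc (0 : ℝ) T) t)
    (hG0 : ∀ (x : Fin d → ℝ) (u : ℝ), G 0 (x, u) = u * f x)
    (hGlin : ∀ t ∈ Set.Icc (0 : ℝ) T, ∀ (x : Fin d → ℝ) (u : ℝ), G t (x, u) = u * G t (x, 1))
    (hGbdd : ∃ C : ℝ, ∀ t ∈ Set.Icc (0 : ℝ) T, ∀ x, |G t (x, 1)| ≤ C)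
    -- (iii) uniqueness of bounded smooth solutions of ∂ₜH = L^h_t H
    (huniq : ∀ H₁ H₂ : ℝ → (Fin d → ℝ) → ℝ,
      IsBddSolPerturbed X h T H₁ → IsBddSolPerturbed X h T H₂ → H₁ 0 = H₂ 0 →
      ∀ t ∈ Set.Icc (0 : ℝ) T, H₁ t = H₂ t) :
    ∀ t ∈ Set.Icc (0 : ℝ) T, ∀ x, F t x = G t (x, 1) := by
  set H₂ : ℝ → (Fin d → ℝ) → ℝ := fun s y => G s (y, 1) with hH₂def
  -- smoothness of the spatial slice g_s : y ↦ G s (y,1) for s ∈ Icc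
  have hslice : ∀ s ∈ Set.Icc (0 : ℝ) T, ContDiff ℝ (⊤ : ℕ∞) (fun y : Fin d → ℝ => G s (y, 1)) := by
    intro s hs
    rw [← contDiffOn_univ]
    have hmap : ContDiff ℝ (⊤ : ℕ∞) (fun y : Fin d → ℝ => ((s, (y, (1:ℝ))) : ℝ × ((Fin d → ℝ) × ℝ))) := by
      fun_prop
    exact hGsmooth.comp (s := Set.univ) hmap.contDiffOn
      (fun y _ => ⟨hs, Set.mem_univ _⟩)
  have hH₂sol : IsBddSolPerturbed X h T H₂ := by
    refine ⟨hGbdd, ?_, ?_⟩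
    · -- joint smoothness
      have hmap : ContDiff ℝ (⊤ : ℕ∞) (fun p : ℝ × (Fin d → ℝ) =>
          ((p.1, (p.2, (1:ℝ))) : ℝ × ((Fin d → ℝ) × ℝ))) := by fun_prop
      exact hGsmooth.comp (s := Set.Icc (0:ℝ) T ×ˢ Set.univ) hmap.contDiffOn
        (fun p hp => ⟨hp.1, Set.mem_univ _⟩)
    · intro s hs y
      have hpde := hGpde s hs y 1
      have hgsm := hslice s hs
      have hfun : G s = fun q : (Fin d → ℝ) × ℝ => q.2 * G s (q.1, 1) := by
        funext q
        exact hGlin s hs q.1 q.2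
      have key : tildeL X h s (G s) (y, 1) = perturbedL X h s (H₂ s) y := by
        rw [hfun]
        exact tildeL_eq_perturbedL X h s (fun y => G s (y, 1)) hgsm y
      rw [key] at hpde
      exact hpde
  have h0 : F 0 = H₂ 0 := by
    funext y
    simp only [hH₂def, hF0, hG0, one_mul]
  intro t ht x
  exact congrFun (huniq F H₂ hF hH₂sol h0 t ht) x
end

section
/- (Proposition 3.5, Bismut's identity in parabolic form.) Let a_1,…,a_m : ℝ^d → ℝ be smooth functions. On ℝ^{d+1} with coordinates (x,u), set X̃_i(x,u) = (X_i(x), a_i(x)) for i = 1,…,m and define the operator L̃ on smooth F : ℝ^{d+1} → ℝ by L̃ F(x,u) = ⟨X_0(x), ∇_x F⟩ + (1/2)∑_{i=1}^m ⟨DX_i(x)X_i(x), ∇_x F⟩ + (1/2)∑_{i=1}^m ⟨X̃_i(x,u), Hess F X̃_i(x,u)⟩. Fix T > 0 and a smooth bounded f : ℝ^d → ℝ. Suppose G : [0,T] × ℝ^{d+1} → ℝ is smooth, affine in u, i.e. G(t,x,u) = A(t,x)·u + B(t,x) for smooth functions A, B, satisfies ∂_t G = L̃ G and G(0,x,u)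 = u·f(x). Then: A satisfies the homogeneous equation ∂_t A = L A with A(0,·) = f, and B(t,x) = G(t,x,0) satisfies the inhomogeneous equation ∂_t B(t,x) = (L B(t,·))(x) + ∑_{i=1}^m a_i(x) ⟨X_i(x), ∇_x A(t,x)⟩ with B(0,·) ≡ 0. -/
open scoped BigOperators

/-- The operator `L̃` on functions of `(x,u)`, built from `X̃ᵢ(x,u) = (Xᵢ(x), aᵢ(x))`. -/
noncomputable def tildeLa {d m : ℕ} (X : Fin (m + 1) → (Fin d → ℝ) → Fin d → ℝ)
    (a : Fin m → (Fin d → ℝ) → ℝ) (F : (Fin d → ℝ) × ℝ → ℝ) (p : (Fin d → ℝ) × ℝ) : ℝ :=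
  fderiv ℝ F p (X 0 p.1, 0)
    + (1 / 2) * ∑ i : Fin m, fderiv ℝ F p (fderiv ℝ (X i.succ) p.1 (X i.succ p.1), 0)
    + (1 / 2) * ∑ i : Fin m,
        fderiv ℝ (fun q => fderiv ℝ F q (X i.succ p.1, a i p.1)) p
          (X i.succ p.1, a i p.1)

lemma slice_smooth {d : ℕ} {T : ℝ} {A : ℝ → (Fin d → ℝ) → ℝ}
    (h : ContDiffOn ℝ (⊤ : ℕ∞) (fun p : ℝ × (Fin d → ℝ) => A p.1 p.2)
      (Set.Icc (0 : ℝ) T ×ˢ Set.univ)) {t : ℝ} (ht : t ∈ Set.Icc (0 : ℝ) T) :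
    ContDiff ℝ (⊤ : ℕ∞) (A t) := by
  rw [← contDiffOn_univ]
  exact h.comp ((contDiff_const.prodMk contDiff_id).contDiffOn)
    (fun x _ => ⟨ht, trivial⟩)

lemma fderiv_affine {d : ℕ} {A B : (Fin d → ℝ) → ℝ} (hA : Differentiable ℝ A)
    (hB : Differentiable ℝ B) (p : (Fin d → ℝ) × ℝ) (w : Fin d → ℝ) (c : ℝ) :
    fderiv ℝ (fun q : (Fin d → ℝ) × ℝ => A q.1 * q.2 + B q.1) p (w, c)
      = A p.1 * c + p.2 * fderiv ℝ A p.1 w + fderiv ℝ B p.1 w := by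
  have h1 : HasFDerivAt (fun q : (Fin d → ℝ) × ℝ => A q.1)
      ((fderiv ℝ A p.1).comp (ContinuousLinearMap.fst ℝ (Fin d → ℝ) ℝ)) p :=
    ((hA p.1).hasFDerivAt).comp p hasFDerivAt_fst
  have h3 : HasFDerivAt (fun q : (Fin d → ℝ) × ℝ => B q.1)
      ((fderiv ℝ B p.1).comp (ContinuousLinearMap.fst ℝ (Fin d → ℝ) ℝ)) p :=
    ((hB p.1).hasFDerivAt).comp p hasFDerivAt_fst
  have h2 : HasFDerivAt (fun q : (Fin d → ℝ) × ℝ => q.2)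
      (ContinuousLinearMap.snd ℝ (Fin d → ℝ) ℝ) p := hasFDerivAt_snd
  have := ((h1.mul h2).add h3).fderiv
  rw [show (fun q : (Fin d → ℝ) × ℝ => A q.1 * q.2 + B q.1) = ((fun q : (Fin d → ℝ) × ℝ => A q.1) * fun q : (Fin d → ℝ) × ℝ => q.2) + fun q : (Fin d → ℝ) × ℝ => B q.1 from rfl, this]
  simp


lemma smooth_fderiv_apply {d : ℕ} {A : (Fin d → ℝ) → ℝ} (hA : ContDiff ℝ (⊤ : ℕ∞) A)
    (w : Fin d → ℝ) : ContDiff ℝ (⊤ : ℕ∞) (fun y => fderiv ℝ A y w) :=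
  (hA.fderiv_right (by simp)).clm_apply contDiff_const

lemma fderiv2_affine {d : ℕ} {A B : (Fin d → ℝ) → ℝ} (hA : ContDiff ℝ (⊤ : ℕ∞) A)
    (hB : ContDiff ℝ (⊤ : ℕ∞) B) (p : (Fin d → ℝ) × ℝ) (w : Fin d → ℝ) (c : ℝ) :
    fderiv ℝ (fun q : (Fin d → ℝ) × ℝ =>
        fderiv ℝ (fun q' : (Fin d → ℝ) × ℝ => A q'.1 * q'.2 + B q'.1) q (w, c)) p (w, c)
      = 2 * (c * fderiv ℝ A p.1 w)
        + p.2 * fderiv ℝ (fun y => fderiv ℝ A y w) p.1 w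
        + fderiv ℝ (fun y => fderiv ℝ B y w) p.1 w := by
  have hA' : ContDiff ℝ (⊤ : ℕ∞) (fun y => fderiv ℝ A y w) := smooth_fderiv_apply hA w
  have hB'' : ContDiff ℝ (⊤ : ℕ∞) (fun y => c * A y + fderiv ℝ B y w) :=
    (contDiff_const.mul hA).add (smooth_fderiv_apply hB w)
  have hfun : (fun q : (Fin d → ℝ) × ℝ =>
      fderiv ℝ (fun q' : (Fin d → ℝ) × ℝ => A q'.1 * q'.2 + B q'.1) q (w, c))
      = fun q : (Fin d → ℝ) × ℝ =>
        (fun y => fderiv ℝ A y w) q.1 * q.2 + (fun y => c * A y + fderiv ℝ B y w) q.1 := by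
    funext q
    rw [fderiv_affine (hA.differentiable (by simp)) (hB.differentiable (by simp))]
    ring
  rw [hfun, fderiv_affine (hA'.differentiable (by simp)) (hB''.differentiable (by simp))]
  have : fderiv ℝ (fun y => c * A y + fderiv ℝ B y w) p.1
      = c • fderiv ℝ A p.1 + fderiv ℝ (fun y => fderiv ℝ B y w) p.1 := by
    rw [show (fun y => c * A y + fderiv ℝ B y w) = (fun y => c * A y) + (fun y => fderiv ℝ B y w) from rfl, fderiv_add ((hA.differentiable (by simp) p.1).const_mul c)
      ((smooth_fderiv_apply hB w).differentiable (by simp) p.1), fderiv_const_mul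
      (hA.differentiable (by simp) p.1)]
  rw [this]
  simp
  ring

lemma tildeLa_eq {d m : ℕ} (X : Fin (m + 1) → (Fin d → ℝ) → Fin d → ℝ)
    (a : Fin m → (Fin d → ℝ) → ℝ) {A B : (Fin d → ℝ) → ℝ}
    (hA : ContDiff ℝ (⊤ : ℕ∞) A) (hB : ContDiff ℝ (⊤ : ℕ∞) B) (x : Fin d → ℝ) (u : ℝ) :
    tildeLa X a (fun p => A p.1 * p.2 + B p.1) (x, u)
      = u * hormanderL X A x
        + (hormanderL X B x + ∑ i : Fin m, a i x * fderiv ℝ A x (X i.succ x)) := by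
  have hdA := hA.differentiable (by simp)
  have hdB := hB.differentiable (by simp)
  simp only [tildeLa, hormanderL]
  rw [fderiv_affine hdA hdB]
  rw [Finset.sum_congr rfl (fun i _ => fderiv_affine hdA hdB (x, u)
    (fderiv ℝ (X i.succ) (x, u).1 (X i.succ (x, u).1)) 0)]
  rw [Finset.sum_congr rfl (fun i _ => fderiv2_affine hA hB (x, u)
    (X i.succ (x, u).1) (a i (x, u).1))]
  simp only [Finset.sum_add_distrib, mul_zero, zero_add, add_zero, ← Finset.mul_sum]
  ring

/-- Proposition 3.5 (Bismut's identity in parabolic form): if `G(t,x,u) = A(t,x)·u + B(t,x)`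
solves `∂ₜG = L̃G` with `G(0,x,u) = u·f(x)`, then `A` solves the homogeneous equation
`∂ₜA = LA`, `A(0,·) = f`, and `B = G(·,·,0)` solves the inhomogeneous equation
`∂ₜB = LB + ∑ᵢ aᵢ⟨Xᵢ, ∇ₓA⟩`, `B(0,·) = 0`. -/
theorem bismut_identity (d m : ℕ) (hd : 0 < d) (hm : 0 < m)
    (X : Fin (m + 1) → (Fin d → ℝ) → Fin d → ℝ)
    (hXsmooth : ∀ i, ContDiff ℝ (⊤ : ℕ∞) (X i)) (hXbdd : ∀ i, BoundedDerivs (X i))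
    (a : Fin m → (Fin d → ℝ) → ℝ) (hasmooth : ∀ i, ContDiff ℝ (⊤ : ℕ∞) (a i))
    (T : ℝ) (hT : 0 < T)
    (f : (Fin d → ℝ) → ℝ) (hfsmooth : ContDiff ℝ (⊤ : ℕ∞) f) (hfbdd : ∃ C : ℝ, ∀ x, |f x| ≤ C)
    (A B : ℝ → (Fin d → ℝ) → ℝ)
    (hAsmooth : ContDiffOn ℝ (⊤ : ℕ∞) (fun p : ℝ × (Fin d → ℝ) => A p.1 p.2)
      (Set.Icc (0 : ℝ) T ×ˢ Set.univ))
    (hBsmooth : ContDiffOn ℝ (⊤ : ℕ∞) (fun p : ℝ × (Fin d → ℝ) => B p.1 p.2)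
      (Set.Icc (0 : ℝ) T ×ˢ Set.univ))
    -- `G(t,x,u) = A(t,x)·u + B(t,x)` satisfies `∂ₜG = L̃G`
    (hGpde : ∀ t ∈ Set.Icc (0 : ℝ) T, ∀ (x : Fin d → ℝ) (u : ℝ),
      HasDerivWithinAt (fun s => A s x * u + B s x)
        (tildeLa X a (fun p => A t p.1 * p.2 + B t p.1) (x, u)) (Set.Icc (0 : ℝ) T) t)
    -- `G(0,x,u) = u·f(x)`
    (hG0 : ∀ (x : Fin d → ℝ) (u : ℝ), A 0 x * u + B 0 x = u * f x) :
    (∀ x, A 0 x = f x) ∧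
    (∀ t ∈ Set.Icc (0 : ℝ) T, ∀ x,
      HasDerivWithinAt (fun s => A s x) (hormanderL X (A t) x) (Set.Icc (0 : ℝ) T) t) ∧
    (∀ x, B 0 x = 0) ∧
    (∀ t ∈ Set.Icc (0 : ℝ) T, ∀ x,
      HasDerivWithinAt (fun s => B s x)
        (hormanderL X (B t) x + ∑ i : Fin m, a i x * fderiv ℝ (A t) x (X i.succ x))
        (Set.Icc (0 : ℝ) T) t) := by

  have hB0 : ∀ x, B 0 x = 0 := fun x => by have := hG0 x 0; simpa using this
  have hA0 : ∀ x, A 0 x = f x := fun x => by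
    have h1 := hG0 x 1
    have h0 := hB0 x
    simp only [mul_one, one_mul] at h1
    linarith
  have hBpde : ∀ t ∈ Set.Icc (0 : ℝ) T, ∀ x,
      HasDerivWithinAt (fun s => B s x)
        (hormanderL X (B t) x + ∑ i : Fin m, a i x * fderiv ℝ (A t) x (X i.succ x))
        (Set.Icc (0 : ℝ) T) t := by
    intro t ht x
    have h0 := hGpde t ht x 0
    rw [tildeLa_eq X a (slice_smooth hAsmooth ht) (slice_smooth hBsmooth ht)] at h0
    simpa using h0
  refine ⟨hA0, ?_, hB0, hBpde⟩
  intro t ht x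
  have h1 := hGpde t ht x 1
  rw [tildeLa_eq X a (slice_smooth hAsmooth ht) (slice_smooth hBsmooth ht)] at h1
  have := h1.sub (hBpde t ht x)
  simp at this
  exact this.congr (fun s _ => by simp) (by simp)
end

section
/- (Measure-theoretic form of Theorem 4.3: small-ball estimates plus moments imply inverse moments of the Malliavin matrix.) Let μ be a probability measure on the space of real d × d matrices. Assume: (i) for every p ≥ 1, ∫ ‖V‖^p dμ(V) < ∞, where ‖·‖ is the operator norm; (ii) for every p ≥ 1 there is a constant C_p such that for every ε ∈ (0,1] and every unit vector ξ ∈ ℝ^d, μ{V : ‖Vξ‖ ≤ ε} ≤ C_p ε^p. Then μ-almost every V is invertible, and for every p ≥ 1 the integral ∫ ‖V^{-1}‖^p dμ(V) (taken over the invertible matrices) is finite. -/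
/-!
Let `m V = min_{‖ξ‖ = 1} ‖V ξ‖`, so that `‖V⁻¹‖ ≤ 1 / m V`. If `m V ≤ ε` and `‖V‖ ≤ ε⁻¹`, then
`‖V t‖ ≤ 2ε` at some point `t` of an `ε²`-net of the unit sphere, and such a net can be chosen
with at most `(1 + 2/ε²)^d` points. The small-ball estimate with exponent `q + 2d`, summed over
the net, and Markov's inequality for `‖V‖^q` therefore give `μ {m ≤ ε} = O(ε^q)` for every `q`.
This forces `m > 0` almost everywhere, and the layer-cake formula turns the bound into
`∫ m⁻¹ ^ p dμ < ∞` for every `p < q`.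
-/

open MeasureTheory Metric Set Module Filter Topology
open scoped ENNReal NNReal

namespace ContinuousLinearMap

variable {E : Type*} [NormedAddCommGroup E] [NormedSpace ℝ E]

/-- For Euclidean `E` this is the smallest singular value of `V`. -/
noncomputable def minimumModulus (V : E →L[ℝ] E) : ℝ :=
  ⨅ ξ : sphere (0 : E) 1, ‖V ξ‖

variable (V W : E →L[ℝ] E)

theorem minimumModulus_nonneg : 0 ≤ V.minimumModulus :=
  Real.iInf_nonneg fun _ => norm_nonneg _

theorem minimumModulus_le {ξ : E} (hξ : ‖ξ‖ = 1) : V.minimumModulus ≤ ‖V ξ‖ :=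
  ciInf_le ⟨0, forall_mem_range.2 fun _ => norm_nonneg _⟩
    (⟨ξ, by simpa using hξ⟩ : sphere (0 : E) 1)

theorem minimumModulus_mul_norm_le (x : E) : V.minimumModulus * ‖x‖ ≤ ‖V x‖ := by
  rcases eq_or_ne x 0 with rfl | hx
  · simp
  have hx' : 0 < ‖x‖ := norm_pos_iff.2 hx
  have := V.minimumModulus_le (ξ := ‖x‖⁻¹ • x) (by simp [norm_smul, hx'.ne'])
  rw [map_smul, norm_smul, norm_inv, norm_norm] at this
  rwa [← le_div_iff₀ hx', div_eq_inv_mul]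

theorem minimumModulus_le_add : V.minimumModulus ≤ W.minimumModulus + ‖V - W‖ := by
  rcases isEmpty_or_nonempty (sphere (0 : E) 1) with h | h
  · simp [minimumModulus, Real.iInf_of_isEmpty]
  rw [← sub_le_iff_le_add]
  refine le_ciInf fun ξ => ?_
  have hξ : ‖(ξ : E)‖ = 1 := by simp
  calc V.minimumModulus - ‖V - W‖ ≤ ‖V ξ‖ - ‖(V - W) ξ‖ := by
        gcongr
        · exact V.minimumModulus_le hξ
        · simpa [hξ] using (V - W).le_opNorm ξ
    _ ≤ ‖W ξ‖ := by simpa using norm_sub_norm_le (V ξ) ((V - W) ξ)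

theorem lipschitzWith_one_minimumModulus :
    LipschitzWith 1 (minimumModulus : (E →L[ℝ] E) → ℝ) :=
  .of_le_add fun V W => by simpa [dist_eq_norm] using V.minimumModulus_le_add W

theorem norm_inverse_le_inv_minimumModulus (h : 0 < V.minimumModulus) :
    ‖Ring.inverse V‖ ≤ V.minimumModulus⁻¹ := by
  by_cases hV : IsUnit V
  · obtain ⟨u, rfl⟩ := hV
    rw [Ring.inverse_unit]
    refine opNorm_le_bound _ (inv_nonneg.2 h.le) fun y => ?_
    rw [inv_mul_eq_div, le_div_iff₀ h, mul_comm]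
    have h := (u : E →L[ℝ] E).minimumModulus_mul_norm_le ((↑u⁻¹ : E →L[ℝ] E) y)
    rwa [← mul_apply_eq_comp, Units.mul_inv, one_apply_eq_self] at h
  · rw [Ring.inverse_non_unit _ hV, norm_zero]
    exact inv_nonneg.2 h.le

theorem isUnit_of_minimumModulus_pos [FiniteDimensional ℝ E] (h : 0 < V.minimumModulus) :
    IsUnit V := by
  have hinj : Function.Injective V := by
    refine (injective_iff_map_eq_zero V).2 fun x hx => norm_eq_zero.1 ?_
    have := V.minimumModulus_mul_norm_le x
    rw [hx, norm_zero] at this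
    exact le_antisymm (nonpos_of_mul_nonpos_right this h) (norm_nonneg x)
  exact isUnit_iff_bijective.2 ⟨hinj, LinearMap.injective_iff_surjective.1 hinj⟩

theorem exists_norm_apply_eq_minimumModulus [FiniteDimensional ℝ E] [Nontrivial E] :
    ∃ ξ : E, ‖ξ‖ = 1 ∧ ‖V ξ‖ = V.minimumModulus := by
  have hne : (sphere (0 : E) 1).Nonempty := NormedSpace.sphere_nonempty.2 zero_le_one
  have := hne.to_subtype
  obtain ⟨ξ, hξ, hmin⟩ :=
    (isCompact_sphere (0 : E) 1).exists_isMinOn hne V.continuous.norm.continuousOn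
  have hξ' : ‖ξ‖ = 1 := by simpa using hξ
  exact ⟨ξ, hξ', le_antisymm (le_ciInf fun η => hmin η.2) (V.minimumModulus_le hξ')⟩

end ContinuousLinearMap

section Packing

variable {E : Type*} [NormedAddCommGroup E] [NormedSpace ℝ E] [FiniteDimensional ℝ E]

theorem card_le_of_isSeparated_of_subset_closedBall {r : ℝ≥0} (hr : 0 < r) {T : Finset E}
    (hT : (T : Set E) ⊆ closedBall 0 1) (hsep : IsSeparated r (T : Set E)) :
    (T.card : ℝ) ≤ (1 + 2 / r) ^ finrank ℝ E := by
  let _ : MeasurableSpace E := borel E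
  have _ : BorelSpace E := ⟨rfl⟩
  set μ : Measure E := Measure.addHaar
  set d := finrank ℝ E
  have hball (x : E) (s : ℝ) (hs : 0 < s) :
      μ (ball x s) = ENNReal.ofReal (s ^ d) * μ (ball 0 1) :=
    Measure.addHaar_ball_of_pos μ x hs
  have hdisj : (T : Set E).PairwiseDisjoint fun t => ball t (r / 2) := fun s hs t ht hst =>
    ball_disjoint_ball <| by
      have : (r : ℝ≥0∞) < edist s t := hsep hs ht hst
      rw [edist_dist, ENNReal.coe_lt_ofReal] at this
      linarith
  have hsub : (⋃ t ∈ T, ball t (r / 2)) ⊆ ball (0 : E) (1 + r / 2) := by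
    refine iUnion₂_subset fun t ht => ball_subset_ball' ?_
    rw [dist_zero_right]
    linarith [mem_closedBall_zero_iff.1 (hT ht)]
  have key : (T.card : ℝ≥0∞) * (ENNReal.ofReal ((r / 2) ^ d) * μ (ball 0 1)) ≤
      ENNReal.ofReal ((1 + r / 2) ^ d) * μ (ball 0 1) := by
    calc (T.card : ℝ≥0∞) * (ENNReal.ofReal ((r / 2) ^ d) * μ (ball 0 1))
        = μ (⋃ t ∈ T, ball t (r / 2)) := by
          rw [measure_biUnion_finset hdisj fun _ _ => measurableSet_ball,
            Finset.sum_congr rfl fun t _ => hball t _ (by positivity), Finset.sum_const,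
            nsmul_eq_mul]
      _ ≤ _ := (measure_mono hsub).trans_eq (hball 0 _ (by positivity))
  rw [← mul_assoc, ENNReal.mul_le_mul_iff_left (measure_ball_pos μ 0 one_pos).ne'
    measure_ball_lt_top.ne, ← ENNReal.ofReal_natCast, ← ENNReal.ofReal_mul (by positivity),
    ENNReal.ofReal_le_ofReal_iff (by positivity)] at key
  calc (T.card : ℝ) = T.card * (r / 2) ^ d / (r / 2) ^ d := by field_simp
    _ ≤ (1 + r / 2) ^ d / (r / 2) ^ d := by gcongr
    _ = (1 + 2 / r) ^ d := by rw [← div_pow]; congr 1; field_simp; ring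

theorem packingNumber_le_of_subset_closedBall {r : ℝ≥0} (hr : 0 < r) {A : Set E}
    (hA : A ⊆ closedBall 0 1) : packingNumber r A ≤ ⌊(1 + 2 / r : ℝ) ^ finrank ℝ E⌋₊ := by
  refine iSup₂_le fun C hCA => iSup_le fun hC => ?_
  by_contra! h
  obtain ⟨t, htC, ht⟩ := exists_subset_encard_eq (Order.add_one_le_of_lt h)
  have htfin : t.Finite := finite_of_encard_eq_coe (k := _ + 1) ht
  have hcard := card_le_of_isSeparated_of_subset_closedBall hr (T := htfin.toFinset)
    (by simpa using (htC.trans hCA).trans hA) (by simpa using hC.subset htC)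
  rw [htfin.encard_eq_coe_toFinset_card] at ht
  rw [show htfin.toFinset.card = _ + 1 by exact_mod_cast ht] at hcard
  push_cast at hcard
  exact (Nat.lt_floor_add_one _).not_ge hcard

theorem exists_finset_isCover_card_le {r : ℝ≥0} (hr : 0 < r) {A : Set E}
    (hA : A ⊆ closedBall 0 1) :
    ∃ T : Finset E, ↑T ⊆ A ∧ IsCover r A T ∧ (T.card : ℝ) ≤ (1 + 2 / r) ^ finrank ℝ E := by
  have hle := (coveringNumber_le_packingNumber r A).trans
    (packingNumber_le_of_subset_closedBall hr hA)
  have hfin : coveringNumber r A ≠ ⊤ := ne_top_of_le_ne_top (by simp) hle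
  have hT : (minimalCover r A).Finite := finite_minimalCover
  refine ⟨hT.toFinset, by simpa using minimalCover_subset,
    by simpa using isCover_minimalCover hfin, ?_⟩
  rw [← encard_minimalCover hfin, hT.encard_eq_coe_toFinset_card, Nat.cast_le] at hle
  exact (Nat.cast_le.2 hle).trans (Nat.floor_le (by positivity))

end Packing

def SmallBallEstimate {α : Type*} [MeasurableSpace α] (μ : Measure α) (f : α → ℝ) (K q : ℝ) :
    Prop :=
  ∀ ε ∈ Ioc (0 : ℝ) 1, μ {x | f x ≤ ε} ≤ ENNReal.ofReal (K * ε ^ q)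

namespace SmallBallEstimate

variable {α : Type*} [MeasurableSpace α] {μ : Measure α} {f : α → ℝ} {K q : ℝ}

theorem mono {K' : ℝ} (h : SmallBallEstimate μ f K q) (hK : K ≤ K') :
    SmallBallEstimate μ f K' q :=
  fun ε hε => (h ε hε).trans <| ENNReal.ofReal_le_ofReal <| by
    have := Real.rpow_nonneg hε.1.le q
    gcongr

theorem measure_nonpos_eq_zero (h : SmallBallEstimate μ f K q) (hq : 0 < q) :
    μ {x | f x ≤ 0} = 0 := by
  have hcont : ContinuousAt (fun ε : ℝ => ENNReal.ofReal (K * ε ^ q)) 0 :=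
    ENNReal.continuous_ofReal.continuousAt.comp
      (continuousAt_const.mul (Real.continuousAt_rpow_const _ _ (Or.inr hq.le)))
  have hlim : Tendsto (fun ε : ℝ => ENNReal.ofReal (K * ε ^ q)) (𝓝[>] 0) (𝓝 0) := by
    simpa [Real.zero_rpow hq.ne'] using hcont.tendsto.mono_left nhdsWithin_le_nhds
  refine nonpos_iff_eq_zero.1 (ge_of_tendsto hlim ?_)
  filter_upwards [Ioo_mem_nhdsGT one_pos] with ε hε
  exact (measure_mono fun x (hx : f x ≤ 0) => hx.trans hε.1.le).trans (h ε ⟨hε.1, hε.2.le⟩)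

theorem lintegral_ofReal_inv_rpow_lt_top [IsFiniteMeasure μ] (h : SmallBallEstimate μ f K q)
    (hf : AEMeasurable f μ) (hf₀ : 0 ≤ f) {p : ℝ} (hp : 0 < p) (hpq : p < q) :
    ∫⁻ x, ENNReal.ofReal ((f x)⁻¹ ^ p) ∂μ < ⊤ := by
  rw [lintegral_rpow_eq_lintegral_meas_lt_mul μ (.of_forall fun x => inv_nonneg.2 (hf₀ x))
    hf.inv hp, ← Ioc_union_Ioi_eq_Ioi zero_le_one]
  refine ENNReal.mul_lt_top ENNReal.ofReal_lt_top <|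
    (lintegral_union_le _ _ _).trans_lt (ENNReal.add_lt_top.2 ⟨?_, ?_⟩)
  · calc ∫⁻ t in Ioc 0 1, μ {x | t < (f x)⁻¹} * ENNReal.ofReal (t ^ (p - 1))
        ≤ ∫⁻ t in Ioc 0 1, μ univ * ENNReal.ofReal (t ^ (p - 1)) :=
          lintegral_mono fun t => by gcongr; exact subset_univ _
      _ = μ univ * ∫⁻ t in Ioc 0 1, ENNReal.ofReal (t ^ (p - 1)) :=
          lintegral_const_mul' _ _ (measure_ne_top μ univ)
      _ < ⊤ := ENNReal.mul_lt_top (measure_lt_top μ univ)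
          (intervalIntegral.intervalIntegrable_rpow' (by linarith)).1.lintegral_lt_top
  · calc ∫⁻ t in Ioi 1, μ {x | t < (f x)⁻¹} * ENNReal.ofReal (t ^ (p - 1))
        ≤ ∫⁻ t in Ioi 1, ENNReal.ofReal (K * t ^ (p - 1 - q)) := by
          refine setLIntegral_mono' measurableSet_Ioi fun t (ht : 1 < t) => ?_
          have ht₀ : 0 < t := one_pos.trans ht
          have hsub : {x | t < (f x)⁻¹} ⊆ {x | f x ≤ t⁻¹} := fun x (hx : t < (f x)⁻¹) =>
            ((lt_inv_comm₀ ht₀ (inv_pos.1 (ht₀.trans hx))).1 hx).le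
          calc μ {x | t < (f x)⁻¹} * ENNReal.ofReal (t ^ (p - 1))
              ≤ ENNReal.ofReal (K * t⁻¹ ^ q) * ENNReal.ofReal (t ^ (p - 1)) := by
                gcongr
                exact (measure_mono hsub).trans
                  (h _ ⟨inv_pos.2 ht₀, inv_le_one_of_one_le₀ ht.le⟩)
            _ = ENNReal.ofReal (K * t ^ (p - 1 - q)) := by
                rw [← ENNReal.ofReal_mul' (by positivity), Real.inv_rpow ht₀.le,
                  ← Real.rpow_neg ht₀.le, mul_assoc, ← Real.rpow_add ht₀]
                ring_nf
      _ < ⊤ := ((integrableOn_Ioi_rpow_of_lt (by linarith) one_pos).const_mul K).lintegral_lt_top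

end SmallBallEstimate

theorem measure_inv_lt_norm_le {X : Type*} [NormedAddCommGroup X] [MeasurableSpace X]
    [OpensMeasurableSpace X] (μ : Measure X) {q ε : ℝ} (hq : 0 < q) (hε : 0 < ε) :
    μ {x | ε⁻¹ < ‖x‖} ≤ ENNReal.ofReal (ε ^ q) * ∫⁻ x, ‖x‖ₑ ^ q ∂μ := by
  have hεq : 0 < ε ^ q := Real.rpow_pos_of_pos hε q
  have hsub : {x : X | ε⁻¹ < ‖x‖} ⊆ {x | (ENNReal.ofReal (ε ^ q))⁻¹ ≤ ‖x‖ₑ ^ q} := by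
    intro x (hx : ε⁻¹ < ‖x‖)
    change (ENNReal.ofReal (ε ^ q))⁻¹ ≤ ‖x‖ₑ ^ q
    rw [← ofReal_norm, ENNReal.ofReal_rpow_of_nonneg (norm_nonneg x) hq.le,
      ← ENNReal.ofReal_inv_of_pos hεq, ← Real.inv_rpow hε.le]
    exact ENNReal.ofReal_le_ofReal (Real.rpow_le_rpow (by positivity) hx.le hq.le)
  calc μ {x | ε⁻¹ < ‖x‖}
      ≤ (∫⁻ x, ‖x‖ₑ ^ q ∂μ) / (ENNReal.ofReal (ε ^ q))⁻¹ :=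
        (measure_mono hsub).trans <| meas_ge_le_lintegral_div
          (measurable_enorm.pow_const q).aemeasurable (by simp) (by simp [hεq])
    _ = ENNReal.ofReal (ε ^ q) * ∫⁻ x, ‖x‖ₑ ^ q ∂μ := by rw [div_eq_mul_inv, inv_inv, mul_comm]

namespace ContinuousLinearMap

variable {E : Type*} [NormedAddCommGroup E] [NormedSpace ℝ E] [FiniteDimensional ℝ E]
  [Nontrivial E]

theorem setOf_minimumModulus_le_subset {T : Set E} {δ : ℝ≥0}
    (hT : IsCover δ (sphere (0 : E) 1) T) (ε R : ℝ) :
    {V : E →L[ℝ] E | V.minimumModulus ≤ ε} ⊆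
      {V | R < ‖V‖} ∪ ⋃ t ∈ T, {V | ‖V t‖ ≤ ε + R * δ} := by
  intro V (hV : V.minimumModulus ≤ ε)
  rcases lt_or_ge R ‖V‖ with hR | hR
  · exact Or.inl hR
  obtain ⟨ξ, hξ, hVξ⟩ := V.exists_norm_apply_eq_minimumModulus
  obtain ⟨t, ht, hξt⟩ := mem_iUnion₂.1 (isCover_iff_subset_iUnion_closedBall.1 hT
    (by simpa using hξ : ξ ∈ sphere (0 : E) 1))
  refine Or.inr (mem_biUnion ht ?_)
  rw [mem_closedBall, dist_eq_norm'] at hξt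
  calc ‖V t‖ = ‖V ξ + V (t - ξ)‖ := by rw [← map_add, add_sub_cancel]
    _ ≤ ‖V ξ‖ + ‖V‖ * ‖t - ξ‖ := (norm_add_le _ _).trans (by gcongr; exact V.le_opNorm _)
    _ ≤ ε + R * δ := by
      have := (norm_nonneg V).trans hR
      gcongr
      exact hVξ ▸ hV

variable [MeasurableSpace (E →L[ℝ] E)] [OpensMeasurableSpace (E →L[ℝ] E)]

theorem measure_minimumModulus_le_le_add (μ : Measure (E →L[ℝ] E)) {q C ε : ℝ} (hq : 0 < q)
    (hC : 0 ≤ C) (hball : ∀ ξ : E, ‖ξ‖ = 1 →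
      SmallBallEstimate μ (fun V => ‖V ξ‖) C (q + ↑(2 * finrank ℝ E)))
    (hε : 0 < ε) (hε' : 2 * ε ≤ 1) :
    μ {V | V.minimumModulus ≤ ε} ≤ ENNReal.ofReal (ε ^ q) * ∫⁻ V, ‖V‖ₑ ^ q ∂μ +
      ENNReal.ofReal (12 ^ finrank ℝ E * 2 ^ q * C * ε ^ q) := by
  set d := finrank ℝ E
  set r : ℝ≥0 := (ε ^ 2).toNNReal
  have hr : (r : ℝ) = ε ^ 2 := Real.coe_toNNReal _ (by positivity)
  obtain ⟨T, hTsub, hTcover, hTcard⟩ :=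
    exists_finset_isCover_card_le (r := r) (Real.toNNReal_pos.2 (by positivity))
      (sphere_subset_closedBall (x := (0 : E)))
  have hnet : ∀ t ∈ T, μ {V : E →L[ℝ] E | ‖V t‖ ≤ ε + ε⁻¹ * r} ≤
      ENNReal.ofReal (C * (2 * ε) ^ (q + ↑(2 * d))) := fun t ht => by
    rw [hr, show ε + ε⁻¹ * ε ^ 2 = 2 * ε by field_simp; ring]
    exact hball t (by simpa using hTsub ht) _ ⟨by positivity, hε'⟩
  have hcount : (T.card : ℝ) * (C * (2 * ε) ^ (q + ↑(2 * d))) ≤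
      12 ^ d * 2 ^ q * C * ε ^ q := by
    rw [hr] at hTcard
    have hsq : (1 + 2 / ε ^ 2) * (2 * ε) ^ 2 ≤ 12 := by
      field_simp
      nlinarith
    calc (T.card : ℝ) * (C * (2 * ε) ^ (q + ↑(2 * d)))
        ≤ (1 + 2 / ε ^ 2) ^ d * (C * (2 * ε) ^ (q + ↑(2 * d))) := by gcongr
      _ = ((1 + 2 / ε ^ 2) * (2 * ε) ^ 2) ^ d * 2 ^ q * C * ε ^ q := by
        rw [Real.rpow_add_natCast (by positivity), Real.mul_rpow zero_le_two hε.le, pow_mul,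
          mul_pow (1 + 2 / ε ^ 2)]
        ring
      _ ≤ 12 ^ d * 2 ^ q * C * ε ^ q := by gcongr
  calc μ {V | V.minimumModulus ≤ ε}
      ≤ μ {V | ε⁻¹ < ‖V‖} + ∑ t ∈ T, μ {V : E →L[ℝ] E | ‖V t‖ ≤ ε + ε⁻¹ * r} :=
        (measure_mono (setOf_minimumModulus_le_subset hTcover ε ε⁻¹)).trans <|
          (measure_union_le _ _).trans (by gcongr; exact measure_biUnion_finset_le _ _)
    _ ≤ ENNReal.ofReal (ε ^ q) * ∫⁻ V, ‖V‖ₑ ^ q ∂μ +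
          T.card * ENNReal.ofReal (C * (2 * ε) ^ (q + ↑(2 * d))) := by
        gcongr
        · exact measure_inv_lt_norm_le μ hq hε
        · exact (Finset.sum_le_sum hnet).trans_eq (by rw [Finset.sum_const, nsmul_eq_mul])
    _ ≤ _ := by
        rw [← ENNReal.ofReal_natCast, ← ENNReal.ofReal_mul (Nat.cast_nonneg _)]
        gcongr

theorem exists_smallBallEstimate_minimumModulus (μ : Measure (E →L[ℝ] E))
    [IsProbabilityMeasure μ] {q C : ℝ} (hq : 0 < q) (hmom : ∫⁻ V, ‖V‖ₑ ^ q ∂μ < ⊤)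
    (hball : ∀ ξ : E, ‖ξ‖ = 1 →
      SmallBallEstimate μ (fun V => ‖V ξ‖) C (q + ↑(2 * finrank ℝ E))) :
    ∃ K, SmallBallEstimate μ minimumModulus K q := by
  set M := (∫⁻ V, ‖V‖ₑ ^ q ∂μ).toReal
  set A := 12 ^ finrank ℝ E * 2 ^ q * max C 0
  refine ⟨M + A + 2 ^ q, fun ε hε => ?_⟩
  have hM : 0 ≤ M := ENNReal.toReal_nonneg
  have hA : 0 ≤ A := by positivity
  have hεq : 0 ≤ ε ^ q := Real.rpow_nonneg hε.1.le q
  rcases le_or_gt (2 * ε) 1 with hε' | hε'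
  · calc μ {V | V.minimumModulus ≤ ε}
        ≤ ENNReal.ofReal (ε ^ q) * ∫⁻ V, ‖V‖ₑ ^ q ∂μ + ENNReal.ofReal (A * ε ^ q) :=
          measure_minimumModulus_le_le_add μ hq (le_max_right C 0)
            (fun ξ hξ => (hball ξ hξ).mono (le_max_left C 0)) hε.1 hε'
      _ = ENNReal.ofReal (M * ε ^ q + A * ε ^ q) := by
          rw [ENNReal.ofReal_add (by positivity) (by positivity), ENNReal.ofReal_mul hM,
            ENNReal.ofReal_toReal hmom.ne, mul_comm]
      _ ≤ ENNReal.ofReal ((M + A + 2 ^ q) * ε ^ q) :=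
          ENNReal.ofReal_le_ofReal (by nlinarith [Real.rpow_nonneg zero_le_two q])
  · calc μ {V | V.minimumModulus ≤ ε}
        ≤ ENNReal.ofReal ((2 * ε) ^ q) :=
          prob_le_one.trans (ENNReal.one_le_ofReal.2 (Real.one_le_rpow hε'.le hq.le))
      _ ≤ ENNReal.ofReal ((M + A + 2 ^ q) * ε ^ q) := by
          rw [Real.mul_rpow zero_le_two hε.1.le]
          exact ENNReal.ofReal_le_ofReal (by nlinarith)

end ContinuousLinearMap

/-- Measure-theoretic form of Theorem 4.3: for a probability measure `μ` on the `d × d`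
matrices (realized as continuous linear maps on Euclidean space, with the operator norm),
small-ball estimates `μ{‖Vξ‖ ≤ ε} ≤ C_p ε^p` (uniformly over unit vectors `ξ`) together
with finiteness of all moments of `‖V‖` imply that `μ`-almost every `V` is invertible and
that all moments of `‖V⁻¹‖` are finite. -/
theorem inverse_moments_of_small_ball (d : ℕ) (hd : 0 < d)
    [MeasurableSpace (EuclideanSpace ℝ (Fin d) →L[ℝ] EuclideanSpace ℝ (Fin d))]
    [BorelSpace (EuclideanSpace ℝ (Fin d) →L[ℝ] EuclideanSpace ℝ (Fin d))]
    (μ : Measure (EuclideanSpace ℝ (Fin d) →L[ℝ] EuclideanSpace ℝ (Fin d)))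
    [IsProbabilityMeasure μ]
    -- (i) all moments of `‖V‖` are finite
    (hmom : ∀ p : ℝ, 1 ≤ p → ∫⁻ V, (‖V‖₊ : ℝ≥0∞) ^ p ∂μ < ⊤)
    -- (ii) small-ball estimates, uniform over unit vectors
    (hball : ∀ p : ℝ, 1 ≤ p → ∃ C : ℝ, ∀ ε : ℝ, ε ∈ Set.Ioc (0 : ℝ) 1 →
      ∀ ξ : EuclideanSpace ℝ (Fin d), ‖ξ‖ = 1 →
        μ {V | ‖V ξ‖ ≤ ε} ≤ ENNReal.ofReal (C * ε ^ p)) :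
    (∀ᵐ V ∂μ, IsUnit V) ∧
    (∀ p : ℝ, 1 ≤ p → ∫⁻ V, (‖Ring.inverse V‖₊ : ℝ≥0∞) ^ p ∂μ < ⊤) := by
  have : Nonempty (Fin d) := ⟨⟨0, hd⟩⟩
  have tail (q : ℝ) (hq : 1 ≤ q) :
      ∃ K, SmallBallEstimate μ ContinuousLinearMap.minimumModulus K q := by
    obtain ⟨C, hC⟩ := hball (q + ↑(2 * d)) (by linarith [(2 * d).cast_nonneg (α := ℝ)])
    exact ContinuousLinearMap.exists_smallBallEstimate_minimumModulus μ (by linarith)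
      (hmom q hq) fun ξ hξ ε hε => by simpa [finrank_euclideanSpace_fin] using hC ε hε ξ hξ
  have hpos : ∀ᵐ V ∂μ, 0 < V.minimumModulus := by
    obtain ⟨K, hK⟩ := tail 1 le_rfl
    simpa [ae_iff, not_lt] using hK.measure_nonpos_eq_zero one_pos
  refine ⟨hpos.mono fun V => V.isUnit_of_minimumModulus_pos, fun p hp => ?_⟩
  obtain ⟨K, hK⟩ := tail (p + 1) (by linarith)
  calc ∫⁻ V, (‖Ring.inverse V‖₊ : ℝ≥0∞) ^ p ∂μ
      ≤ ∫⁻ V, ENNReal.ofReal (V.minimumModulus⁻¹ ^ p) ∂μ := by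
        refine lintegral_mono_ae (hpos.mono fun V hV => ?_)
        rw [← ENNReal.ofReal_rpow_of_nonneg (inv_nonneg.2 hV.le) (by linarith),
          ← enorm_eq_nnnorm, ← ofReal_norm]
        gcongr
        exact V.norm_inverse_le_inv_minimumModulus hV
    _ < ⊤ := hK.lintegral_ofReal_inv_rpow_lt_top
        ContinuousLinearMap.lipschitzWith_one_minimumModulus.continuous.aemeasurable
        ContinuousLinearMap.minimumModulus_nonneg (by linarith) (by linarith)
end
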